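/- Fix x₁, x₂ ∈ [0,1], let m = min(x₁,x₂), M = max(x₁,x₂), and set t̃₁ = (3 − x₁ − x₂)/2, t̃₂ = (2 − x₁ − x₂)/2, t̃₃ = (1 − x₁ − x₂)/2. Then the unique minimizer over [0,1] of h ↦ G(x₁,x₂,h) equals: t̃₁ if t̃₁ ≤ m; m if t̃₂ ≤ m ≤ t̃₁; t̃₂ if m ≤ t̃₂ ≤ M; M if t̃₃ ≤ M ≤ t̃₂; and t̃₃ if M ≤ t̃₃. -/
import Mathlib
set_option maxHeartbeats 1000000


/-- Expected final rank in Robbins' problem with 4 observations, first two observations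
`x₁, x₂`, third accepted iff `≤ h`, fourth always accepted. -/
noncomputable def G (x₁ x₂ h : ℝ) : ℝ :=
  3/2 + h^2 - h + (2 - x₁ - x₂) * (1 - h) + max (h - x₁) 0 + max (h - x₂) 0

/-- `v` is the unique minimizer of `h ↦ G x₁ x₂ h` over `[0,1]`. -/
def UniqueMinimizer (x₁ x₂ v : ℝ) : Prop :=
  v ∈ Set.Icc (0:ℝ) 1 ∧ ∀ h ∈ Set.Icc (0:ℝ) 1, h ≠ v → G x₁ x₂ v < G x₁ x₂ h

lemma max0_of_le {a b : ℝ} (h : a ≤ b) : max (a - b) 0 = 0 := max_eq_right (by linarith)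
lemma max0_of_ge {a b : ℝ} (h : b ≤ a) : max (a - b) 0 = a - b := max_eq_left (by linarith)

lemma Gcomm (x₁ x₂ h : ℝ) : G x₁ x₂ h = G x₂ x₁ h := by unfold G; ring

lemma UM_comm {x₁ x₂ v : ℝ} (h : UniqueMinimizer x₂ x₁ v) : UniqueMinimizer x₁ x₂ v := by
  obtain ⟨hm, hmin⟩ := h
  refine ⟨hm, fun h hh hne => ?_⟩
  rw [Gcomm, Gcomm x₁ x₂ h]
  exact hmin h hh hne

lemma helper (x₁ x₂ : ℝ) (h0 : 0 ≤ x₁) (h12 : x₁ ≤ x₂) (h1 : x₂ ≤ 1) :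
    ((3 - x₁ - x₂)/2 ≤ x₁ → UniqueMinimizer x₁ x₂ ((3 - x₁ - x₂)/2)) ∧
    ((2 - x₁ - x₂)/2 ≤ x₁ ∧ x₁ ≤ (3 - x₁ - x₂)/2 → UniqueMinimizer x₁ x₂ x₁) ∧
    (x₁ ≤ (2 - x₁ - x₂)/2 ∧ (2 - x₁ - x₂)/2 ≤ x₂ →
      UniqueMinimizer x₁ x₂ ((2 - x₁ - x₂)/2)) ∧
    ((1 - x₁ - x₂)/2 ≤ x₂ ∧ x₂ ≤ (2 - x₁ - x₂)/2 → UniqueMinimizer x₁ x₂ x₂) ∧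
    (x₂ ≤ (1 - x₁ - x₂)/2 → UniqueMinimizer x₁ x₂ ((1 - x₁ - x₂)/2)) := by
  refine ⟨?_, ?_, ?_, ?_, ?_⟩
  · intro hA
    refine ⟨⟨by linarith, by linarith⟩, ?_⟩
    rintro h ⟨hl, hr⟩ hne
    rw [G, G, max0_of_le hA, max0_of_le (hA.trans h12)]
    rcases le_total h x₁ with c1 | c1 <;> rcases le_total h x₂ with c2 | c2 <;>
      (first | rw [max0_of_le c1] | rw [max0_of_ge c1]) <;>
      (first | rw [max0_of_le c2] | rw [max0_of_ge c2]) <;>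
      rcases hne.lt_or_gt with hlt | hlt <;>
      nlinarith [mul_pos (sub_pos.2 hlt) (sub_pos.2 hlt)]
  · rintro ⟨hB1, hB2⟩
    refine ⟨⟨h0, h12.trans h1⟩, ?_⟩
    rintro h ⟨hl, hr⟩ hne
    rw [G, G, max0_of_le (le_refl x₁), max0_of_le h12]
    rcases le_total h x₁ with c1 | c1 <;> rcases le_total h x₂ with c2 | c2 <;>
      (first | rw [max0_of_le c1] | rw [max0_of_ge c1]) <;>
      (first | rw [max0_of_le c2] | rw [max0_of_ge c2]) <;>
      rcases hne.lt_or_gt with hlt | hlt <;>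
      nlinarith [mul_pos (sub_pos.2 hlt) (sub_pos.2 hlt)]
  · rintro ⟨hC1, hC2⟩
    refine ⟨⟨by linarith, by linarith⟩, ?_⟩
    rintro h ⟨hl, hr⟩ hne
    rw [G, G, max0_of_ge hC1, max0_of_le hC2]
    rcases le_total h x₁ with c1 | c1 <;> rcases le_total h x₂ with c2 | c2 <;>
      (first | rw [max0_of_le c1] | rw [max0_of_ge c1]) <;>
      (first | rw [max0_of_le c2] | rw [max0_of_ge c2]) <;>
      rcases hne.lt_or_gt with hlt | hlt <;>
      nlinarith [mul_pos (sub_pos.2 hlt) (sub_pos.2 hlt)]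
  · rintro ⟨hD1, hD2⟩
    refine ⟨⟨h0.trans h12, h1⟩, ?_⟩
    rintro h ⟨hl, hr⟩ hne
    rw [G, G, max0_of_ge h12, max0_of_le (le_refl x₂)]
    rcases le_total h x₁ with c1 | c1 <;> rcases le_total h x₂ with c2 | c2 <;>
      (first | rw [max0_of_le c1] | rw [max0_of_ge c1]) <;>
      (first | rw [max0_of_le c2] | rw [max0_of_ge c2]) <;>
      rcases hne.lt_or_gt with hlt | hlt <;>
      nlinarith [mul_pos (sub_pos.2 hlt) (sub_pos.2 hlt)]
  · intro hE
    refine ⟨⟨by linarith, by linarith⟩, ?_⟩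
    rintro h ⟨hl, hr⟩ hne
    rw [G, G, max0_of_ge (h12.trans hE), max0_of_ge hE]
    rcases le_total h x₁ with c1 | c1 <;> rcases le_total h x₂ with c2 | c2 <;>
      (first | rw [max0_of_le c1] | rw [max0_of_ge c1]) <;>
      (first | rw [max0_of_le c2] | rw [max0_of_ge c2]) <;>
      rcases hne.lt_or_gt with hlt | hlt <;>
      nlinarith [mul_pos (sub_pos.2 hlt) (sub_pos.2 hlt)]

theorem robbins_n4_step3_threshold :
    ∀ x₁ ∈ Set.Icc (0:ℝ) 1, ∀ x₂ ∈ Set.Icc (0:ℝ) 1,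
      ((3 - x₁ - x₂)/2 ≤ min x₁ x₂ → UniqueMinimizer x₁ x₂ ((3 - x₁ - x₂)/2)) ∧
      ((2 - x₁ - x₂)/2 ≤ min x₁ x₂ ∧ min x₁ x₂ ≤ (3 - x₁ - x₂)/2 →
        UniqueMinimizer x₁ x₂ (min x₁ x₂)) ∧
      (min x₁ x₂ ≤ (2 - x₁ - x₂)/2 ∧ (2 - x₁ - x₂)/2 ≤ max x₁ x₂ →
        UniqueMinimizer x₁ x₂ ((2 - x₁ - x₂)/2)) ∧
      ((1 - x₁ - x₂)/2 ≤ max x₁ x₂ ∧ max x₁ x₂ ≤ (2 - x₁ - x₂)/2 →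
        UniqueMinimizer x₁ x₂ (max x₁ x₂)) ∧
      (max x₁ x₂ ≤ (1 - x₁ - x₂)/2 → UniqueMinimizer x₁ x₂ ((1 - x₁ - x₂)/2)) := by
  intro x₁ hx₁ x₂ hx₂
  rcases le_total x₁ x₂ with hc | hc
  · rw [min_eq_left hc, max_eq_right hc]
    exact helper x₁ x₂ hx₁.1 hc hx₂.2
  · rw [min_eq_right hc, max_eq_left hc]
    obtain ⟨A, B, C, D, E⟩ := helper x₂ x₁ hx₂.1 hc hx₁.2
    refine ⟨?_, ?_, ?_, ?_, ?_⟩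
    · intro hyp
      rw [show (3 - x₁ - x₂)/2 = (3 - x₂ - x₁)/2 by ring] at *
      exact UM_comm (A hyp)
    · intro hyp
      rw [show (3 - x₁ - x₂)/2 = (3 - x₂ - x₁)/2 by ring,
          show (2 - x₁ - x₂)/2 = (2 - x₂ - x₁)/2 by ring] at hyp
      exact UM_comm (B hyp)
    · intro hyp
      rw [show (2 - x₁ - x₂)/2 = (2 - x₂ - x₁)/2 by ring] at *
      exact UM_comm (C hyp)
    · intro hyp
      rw [show (1 - x₁ - x₂)/2 = (1 - x₂ - x₁)/2 by ring,
          show (2 - x₁ - x₂)/2 = (2 - x₂ - x₁)/2 by ring] at hyp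
      exact UM_comm (D hyp)
    · intro hyp
      rw [show (1 - x₁ - x₂)/2 = (1 - x₂ - x₁)/2 by ring] at *
      exact UM_comm (E hyp)
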